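/- Let F₃ be the free group on generators a, b, c, and let w ∈ F₃. If there exist ε₁, ε₂, ε₃, ε₄ ∈ {1, -1} such that a^{ε₁} * w * b^{ε₂} * w⁻¹ is conjugate in F₃ to a^{ε₃} * b^{ε₄}, then w lies in the subgroup of F₃ generated by a and b. -/

import Mathlib

/-!
Write `w = u * t` with `t` a power of `b` and `u` a reduced word not ending in `b^{±1}`. Then
`u b^{ε₂} u⁻¹` is the reduced word of `w b^{ε₂} w⁻¹`, and, after passing to the inverse if the
first letter of `u` cancels against `a^{ε₁}`, the element `a^{ε₁} w b^{ε₂} w⁻¹` has the reduced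
word `a^{±1} u b^{±1} u⁻¹`.

On the other hand, conjugating an element of `H = ⟨a, b⟩` letter by letter shows that the
reduced word of any conjugate of it has the shape `u' v u'⁻¹` with `v` a word in `a, b`, so its
cyclic reduction only involves `a` and `b`. Cyclically reducing `a^{±1} u b^{±1} u⁻¹` strips
letters of `u` only while they equal that `a^{±1}`, and what is left contains the rest of `u`.
Hence `u`, and with it `w = u * t`, lies in `H`.
-/

namespace FreeGroup

variable {α : Type*} {L : List (α × Bool)} {x : α × Bool}

theorem mk_cons (x : α × Bool) (L : List (α × Bool)) : mk (x :: L) = mk [x] * mk L :=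
  rfl

theorem inv_mk_singleton (x : α × Bool) : (mk [x])⁻¹ = mk [(x.1, !x.2)] := by
  rw [inv_mk]; rfl

theorem exists_zpow_eq_mk_singleton (a : α) {ε : ℤ} (hε : ε = 1 ∨ ε = -1) :
    ∃ s, of a ^ ε = mk [(a, s)] := by
  rcases hε with rfl | rfl
  · exact ⟨true, zpow_one _⟩
  · exact ⟨false, by rw [zpow_neg_one, of, inv_mk_singleton]; rfl⟩

theorem IsReduced.invRev (h : IsReduced L) : IsReduced (invRev L) := by
  simpa [IsReduced, FreeGroup.invRev, List.isChain_reverse, List.isChain_map, flip, eq_comm]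
    using h

theorem IsReduced.cons (hL : IsReduced L) (hx : ∀ y ∈ L.head?, y ≠ (x.1, !x.2)) :
    IsReduced (x :: L) := by
  cases L with
  | nil => exact .singleton
  | cons y L =>
    refine isReduced_cons_cons.mpr ⟨fun h => ?_, hL⟩
    have := hx y rfl
    cases x; cases y
    simp_all

theorem IsReduced.concat (hL : IsReduced L) (hx : ∀ y ∈ L.getLast?, y ≠ (x.1, !x.2)) :
    IsReduced (L ++ [x]) := by
  refine List.isChain_append.mpr ⟨hL, List.isChain_singleton x, fun y hy z hz h => ?_⟩
  obtain rfl : z = x := by simpa using hz.symm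
  have := hx y hy
  cases z; cases y
  simp_all

variable [DecidableEq α] {S : Set α}

theorem toWord_mk_of_isReduced (h : IsReduced L) : (mk L).toWord = L := by
  rw [toWord_mk, h.reduce_eq]

theorem mem_closure_image_of_iff {g : FreeGroup α} :
    g ∈ Subgroup.closure (of '' S) ↔ ∀ x ∈ g.toWord, x.1 ∈ S := by
  constructor
  · intro hg
    induction hg using Subgroup.closure_induction with
    | mem y hy =>
      obtain ⟨a, ha, rfl⟩ := hy
      simpa [toWord_of] using ha
    | one => simp
    | mul g h _ _ hg hh =>
      exact fun x hx => (List.mem_append.mp ((toWord_mul_sublist g h).subset hx)).elim (hg x) (hh x)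
    | inv g _ hg =>
      intro x hx
      simp only [toWord_inv, invRev, List.mem_reverse, List.mem_map] at hx
      obtain ⟨y, hy, rfl⟩ := hx
      exact hg y hy
  · intro hg
    rw [← mk_toWord (x := g)]
    generalize g.toWord = L at hg
    induction L with
    | nil => exact one_mem _
    | cons x L ih =>
      rw [mk_cons]
      refine mul_mem ?_ (ih fun y hy => hg y (List.mem_cons_of_mem x hy))
      have hof : of x.1 ∈ Subgroup.closure (of '' S) :=
        Subgroup.subset_closure ⟨x.1, hg x List.mem_cons_self, rfl⟩
      obtain ⟨a, _ | _⟩ := x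
      · exact (inv_mk_singleton (a, true)) ▸ inv_mem hof
      · exact hof

theorem toWord_conj_singleton {W : List (α × Bool)} (hW : W ≠ []) (hred : IsReduced W)
    (hhead : ∀ y ∈ W.head?, y ≠ (x.1, !x.2)) (hlast : ∀ y ∈ W.getLast?, y ≠ x) :
    (mk [x] * mk W * (mk [x])⁻¹).toWord = x :: W ++ [(x.1, !x.2)] := by
  rw [inv_mk_singleton, mul_mk, mul_mk]
  refine toWord_mk_of_isReduced (IsReduced.cons (hred.concat (by simpa using hlast)) ?_)
  obtain ⟨w, W, rfl⟩ := List.exists_cons_of_ne_nil hW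
  simpa using hhead

theorem exists_toWord_conj_singleton_of_mem_closure {g : FreeGroup α}
    (hg : g ∈ Subgroup.closure (of '' S)) (x : α × Bool) :
    ∃ u v, (mk [x] * g * (mk [x])⁻¹).toWord = u ++ v ++ invRev u ∧ ∀ y ∈ v, y.1 ∈ S := by
  by_cases hx : x.1 ∈ S
  · have hx' : mk [x] ∈ Subgroup.closure (of '' S) := by
      rw [mem_closure_image_of_iff, toWord_mk_of_isReduced .singleton]
      simpa using hx
    exact ⟨[], _, by simp, mem_closure_image_of_iff.mp (mul_mem (mul_mem hx' hg) (inv_mem hx'))⟩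
  have hv := mem_closure_image_of_iff.mp hg
  rw [← mk_toWord (x := g)]
  rcases hW : g.toWord with _ | ⟨z, v⟩
  · refine ⟨[], [], ?_, by simp⟩
    rw [← one_eq_mk, mul_one, mul_inv_cancel, toWord_one]
    rfl
  rw [hW] at hv
  refine ⟨[x], z :: v, ?_, hv⟩
  rw [toWord_conj_singleton (List.cons_ne_nil z v) (hW ▸ isReduced_toWord)]
  · simp [invRev]
  · simp only [List.head?_cons, Option.mem_def, Option.some.injEq, forall_eq']
    rintro rfl
    exact hx (hv (x.1, !x.2) List.mem_cons_self)
  · exact fun y hy h => hx (h ▸ hv y (List.mem_of_getLast? hy))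

theorem exists_toWord_conj_singleton {g : FreeGroup α} {u v : List (α × Bool)}
    (hg : g.toWord = u ++ v ++ invRev u) (hv : ∀ y ∈ v, y.1 ∈ S) (x : α × Bool) :
    ∃ u' v', (mk [x] * g * (mk [x])⁻¹).toWord = u' ++ v' ++ invRev u' ∧ ∀ y ∈ v', y.1 ∈ S := by
  rcases u with _ | ⟨y, u⟩
  · refine exists_toWord_conj_singleton_of_mem_closure (mem_closure_image_of_iff.mpr ?_) x
    simpa [hg] using hv
  have hred : IsReduced (y :: u ++ v ++ invRev (y :: u)) := hg ▸ isReduced_toWord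
  have hW : y :: u ++ v ++ invRev (y :: u) = y :: (u ++ v ++ invRev u) ++ [(y.1, !y.2)] := by
    simp [invRev]
  rw [← mk_toWord (x := g), hg, hW]
  rw [hW] at hred
  by_cases hy : y = (x.1, !x.2)
  · subst hy
    refine ⟨u, v, ?_, hv⟩
    have hcancel : mk [x] * mk ((x.1, !x.2) :: (u ++ v ++ invRev u) ++ [x]) * (mk [x])⁻¹ =
        mk (u ++ v ++ invRev u) := by
      rw [show (x.1, !x.2) :: (u ++ v ++ invRev u) ++ [x] =
        [(x.1, !x.2)] ++ (u ++ v ++ invRev u) ++ [x] from rfl, ← mul_mk, ← mul_mk,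
        ← inv_mk_singleton]
      group
    have hM : IsReduced (u ++ v ++ invRev u) := hred.infix ⟨[_], [_], rfl⟩
    simp only [Bool.not_not, Prod.mk.eta]
    rw [hcancel, toWord_mk_of_isReduced hM]
  · refine ⟨x :: y :: u, v, ?_, hv⟩
    rw [toWord_conj_singleton (by simp) hred]
    · simp [invRev]
    · simpa using hy
    · simp only [List.getLast?_append, List.getLast?_singleton, Option.some_or, Option.mem_def,
        Option.some.injEq, forall_eq']
      rintro rfl
      exact hy (by simp)

theorem exists_toWord_conj_of_mem_closure (r : FreeGroup α) {g : FreeGroup α}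
    (hg : g ∈ Subgroup.closure (of '' S)) :
    ∃ u v, (r * g * r⁻¹).toWord = u ++ v ++ invRev u ∧ ∀ y ∈ v, y.1 ∈ S := by
  rw [← mk_toWord (x := r)]
  induction r.toWord with
  | nil => exact ⟨[], g.toWord, by simp [← one_eq_mk], mem_closure_image_of_iff.mp hg⟩
  | cons x L ih =>
    obtain ⟨u, v, h, hv⟩ := ih
    have hsplit : mk (x :: L) * g * (mk (x :: L))⁻¹ =
        mk [x] * (mk L * g * (mk L)⁻¹) * (mk [x])⁻¹ := by
      rw [mk_cons x]
      group
    rw [hsplit]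
    exact exists_toWord_conj_singleton h hv x

theorem reduceCyclically_subset (L : List (α × Bool)) : reduceCyclically L ⊆ L := by
  intro x hx
  rw [← reduceCyclically.conj_conjugator_reduceCyclically L]
  exact List.mem_append_left _ (List.mem_append_right _ hx)

theorem reduceCyclically_conj_subset (u v : List (α × Bool)) :
    reduceCyclically (u ++ v ++ invRev u) ⊆ v := by
  induction u with
  | nil => simpa using reduceCyclically_subset v
  | cons y u ih =>
    have : y :: u ++ v ++ invRev (y :: u) = y :: (u ++ v ++ invRev u ++ [(y.1, !y.2)]) := by
      simp [invRev]
    rw [this, reduceCyclically.cons_append]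
    simpa using ih

theorem subset_cons_reduceCyclically (ξ : α × Bool) (u m : List (α × Bool)) :
    u ⊆ ξ :: reduceCyclically (ξ :: (u ++ m ++ invRev u)) := by
  induction u with
  | nil => simp
  | cons y u ih =>
    have : ξ :: (y :: u ++ m ++ invRev (y :: u)) =
        ξ :: ((y :: u ++ m ++ invRev u) ++ [(y.1, !y.2)]) := by
      simp [invRev]
    rw [this, reduceCyclically.cons_append]
    split_ifs with h
    · obtain rfl : y = ξ := by cases y; cases ξ; simp_all
      simpa [List.cons_subset] using ih
    · intro x hx
      simp only [List.mem_cons] at hx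
      simp only [List.cons_append, List.append_assoc, List.mem_cons, List.mem_append]
      tauto

theorem forall_mem_reduceCyclically_toWord_of_isConj {g h : FreeGroup α} (hgh : IsConj g h)
    (hh : h ∈ Subgroup.closure (of '' S)) : ∀ x ∈ reduceCyclically g.toWord, x.1 ∈ S := by
  obtain ⟨r, rfl⟩ : ∃ r, r * h * r⁻¹ = g := isConj_iff.mp hgh.symm
  obtain ⟨u, v, hw, hv⟩ := exists_toWord_conj_of_mem_closure r hh
  rw [hw]
  exact fun x hx => hv x (reduceCyclically_conj_subset u v hx)

theorem forall_mem_of_isConj_mk_cons {ξ : α × Bool} {u m : List (α × Bool)} {h : FreeGroup α}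
    (hξ : ξ.1 ∈ S) (hred : IsReduced (ξ :: (u ++ m ++ invRev u)))
    (hconj : IsConj (mk (ξ :: (u ++ m ++ invRev u))) h) (hh : h ∈ Subgroup.closure (of '' S)) :
    ∀ x ∈ u, x.1 ∈ S := by
  have hcore := forall_mem_reduceCyclically_toWord_of_isConj hconj hh
  rw [toWord_mk_of_isReduced hred] at hcore
  intro x hx
  rcases List.mem_cons.mp (subset_cons_reduceCyclically ξ u m hx) with rfl | hx
  · exact hξ
  · exact hcore x hx

theorem mk_mem_closure_of_isConj_singleton_mul {ξ β : α × Bool} {u : List (α × Bool)}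
    {h : FreeGroup α} (hξ : ξ.1 ∈ S) (hred : IsReduced (u ++ [β] ++ invRev u))
    (hconj : IsConj (mk [ξ] * mk (u ++ [β] ++ invRev u)) h)
    (hh : h ∈ Subgroup.closure (of '' S)) :
    mk u ∈ Subgroup.closure (of '' S) := by
  rw [mem_closure_image_of_iff, toWord_mk_of_isReduced (hred.infix ⟨[], [β] ++ invRev u, by simp⟩)]
  rcases u with _ | ⟨y, u⟩
  · simp
  by_cases hy : y = (ξ.1, !ξ.2)
  · -- `ξ` cancels against `y = ξ⁻¹`; prepend `ξ⁻¹` to the inverse word instead, which also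
    -- starts with `y`.
    have hinv : invRev (y :: u ++ [β] ++ invRev (y :: u)) =
        y :: u ++ [(β.1, !β.2)] ++ invRev (y :: u) := by
      simp [invRev, Function.comp_def]
    refine forall_mem_of_isConj_mk_cons (ξ := (ξ.1, !ξ.2)) (m := [(β.1, !β.2)]) (h := h⁻¹) hξ
      ?_ ?_ (inv_mem hh)
    · rw [← hinv]
      refine hred.invRev.cons ?_
      rw [hinv, hy]
      cases ξ
      simp
    · obtain ⟨c, hc⟩ := isConj_iff.mp hconj
      refine isConj_iff.mpr ⟨c * mk [ξ], ?_⟩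
      rw [← hc, mk_cons (ξ.1, !ξ.2), ← hinv, ← inv_mk, ← inv_mk_singleton]
      group
  · refine forall_mem_of_isConj_mk_cons hξ (hred.cons ?_) (by rwa [mul_mk] at hconj) hh
    simpa using hy

theorem exists_reduced_conj_singleton (w : FreeGroup α) (β : α × Bool) :
    ∃ u t, w = mk u * t ∧ t ∈ Subgroup.zpowers (of β.1) ∧ IsReduced (u ++ [β] ++ invRev u) ∧
      w * mk [β] * w⁻¹ = mk (u ++ [β] ++ invRev u) := by
  set p : α × Bool → Bool := fun x => x.1 = β.1
  set u := w.toWord.rdropWhile p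
  set t := w.toWord.rtakeWhile p
  have hw : w.toWord = u ++ t := List.rdropWhile_append_rtakeWhile.symm
  have hu : IsReduced u := (isReduced_toWord (x := w)).infix (hw ▸ (List.prefix_append u t).isInfix)
  have hlast : ∀ y ∈ u.getLast?, y.1 ≠ β.1 := by
    intro y hy hyβ
    obtain ⟨hne, rfl⟩ := List.mem_getLast?_eq_getLast hy
    exact List.rdropWhile_last_not (p := p) (l := w.toWord) hne (by simpa [p] using hyβ)
  have zpowers_of {g : FreeGroup α} (hg : ∀ x ∈ g.toWord, x.1 = β.1) :
      g ∈ Subgroup.zpowers (of β.1) := by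
    rwa [Subgroup.zpowers_eq_closure, ← Set.image_singleton, mem_closure_image_of_iff]
  have ht : mk t ∈ Subgroup.zpowers (of β.1) := by
    refine zpowers_of fun x hx => ?_
    rw [toWord_mk_of_isReduced ((isReduced_toWord (x := w)).infix
      (hw ▸ (List.suffix_append u t).isInfix))] at hx
    simpa [p] using List.mem_rtakeWhile_imp hx
  have hβ : mk [β] ∈ Subgroup.zpowers (of β.1) := zpowers_of (by simp [toWord_mk])
  have hwut : w = mk u * mk t := by rw [mul_mk, ← hw, mk_toWord]
  refine ⟨u, mk t, hwut, ht, ?_, ?_⟩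
  · refine (hu.concat ?_).append_overlap ?_ (List.cons_ne_nil β [])
    · exact fun y hy h => hlast y hy (by rw [h])
    · simpa [invRev] using
        (hu.concat (x := (β.1, !β.2)) fun y hy h => hlast y hy (by rw [h])).invRev
  · calc w * mk [β] * w⁻¹ = mk u * (mk t * mk [β] * (mk t)⁻¹) * (mk u)⁻¹ := by rw [hwut]; group
      _ = mk u * mk [β] * (mk u)⁻¹ := by rw [setLike_mul_comm ht hβ]; group
      _ = mk (u ++ [β] ++ invRev u) := by rw [inv_mk, mul_mk, mul_mk]

end FreeGroup

open FreeGroup in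
/-- In the free group `F₃` on `a, b, c`: if for some signs `ε₁, ε₂, ε₃, ε₄ ∈ {1, -1}` the
element `a^ε₁ * w * b^ε₂ * w⁻¹` is conjugate to `a^ε₃ * b^ε₄`, then `w` lies in the subgroup
generated by `a` and `b`. -/
theorem mem_closure_of_conjugate_freeGroup (w : FreeGroup (Fin 3))
    (h : ∃ ε₁ ε₂ ε₃ ε₄ : ℤ,
      (ε₁ = 1 ∨ ε₁ = -1) ∧ (ε₂ = 1 ∨ ε₂ = -1) ∧ (ε₃ = 1 ∨ ε₃ = -1) ∧ (ε₄ = 1 ∨ ε₄ = -1) ∧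
      ∃ r : FreeGroup (Fin 3),
        FreeGroup.of (0 : Fin 3) ^ ε₁ * w * FreeGroup.of (1 : Fin 3) ^ ε₂ * w⁻¹ =
          r * (FreeGroup.of (0 : Fin 3) ^ ε₃ * FreeGroup.of (1 : Fin 3) ^ ε₄) * r⁻¹) :
    w ∈ Subgroup.closure ({FreeGroup.of 0, FreeGroup.of 1} : Set (FreeGroup (Fin 3))) := by
  obtain ⟨ε₁, ε₂, ε₃, ε₄, h₁, h₂, -, -, r, hr⟩ := h
  obtain ⟨s₁, hs₁⟩ := exists_zpow_eq_mk_singleton (0 : Fin 3) h₁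
  obtain ⟨s₂, hs₂⟩ := exists_zpow_eq_mk_singleton (1 : Fin 3) h₂
  obtain ⟨u, t, hw, ht, hred, hconj⟩ := exists_reduced_conj_singleton w (1, s₂)
  rw [← Set.image_pair]
  have hof (i : Fin 3) (hi : i ∈ ({0, 1} : Set (Fin 3))) :
      of i ∈ Subgroup.closure (of '' {0, 1}) := Subgroup.subset_closure ⟨i, hi, rfl⟩
  have hu : mk u ∈ Subgroup.closure (of '' {0, 1}) := by
    refine mk_mem_closure_of_isConj_singleton_mul (ξ := (0, s₁)) (by simp) hred
      (isConj_iff.mpr ⟨r⁻¹, ?_⟩)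
      (mul_mem (zpow_mem (hof 0 (by simp)) ε₃) (zpow_mem (hof 1 (by simp)) ε₄))
    rw [← hconj, ← hs₁, ← hs₂]
    calc _ = r⁻¹ * (of 0 ^ ε₁ * w * of 1 ^ ε₂ * w⁻¹) * r := by group
      _ = _ := by rw [hr]; group
  rw [hw]
  exact mul_mem hu (Subgroup.zpowers_le.mpr (hof 1 (by simp)) ht)
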